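/- In the root system of type C_n, let γ_1, γ_2 be distinct positive roots with ht(γ_1) ≤ ht(γ_2). If the pair (γ_1, γ_2) is not a 'bad pair' (i.e., it is not the case that (1/2)·ht(γ_2) < ht(γ_1) and ⟨γ_2, γ_1^∨⟩ = 2 with γ_1, γ_2 of the specific form γ_2 = 2(α_i+...+α_{n-1})+β, γ_1 = α_i+...+α_{j-1}+2(α_j+...+α_{n-1})+β), then the reflection s_{γ_1}(γ_2) = γ_2 − ⟨γ_2, γ_1^∨⟩ γ_1 is again a positive root. -/

import Mathlib

/-! The reflection `s_{γ₁}` permutes the coordinates of `ℚⁿ` up to sign, so `s_{γ₁}(γ₂)` is a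
root, and it is positive exactly when its height `ht γ₂ - ⟨γ₂, γ₁^∨⟩ ht γ₁` is nonnegative. As
`0 < ht γ₁ ≤ ht γ₂`, this height can only be negative when `⟨γ₂, γ₁^∨⟩ > 1`, which for distinct
positive roots forces `γ₂ = 2eᵢ` and `γ₁ = eᵢ ± eⱼ`. Then `s_{γ₁}(γ₂) = ∓2eⱼ`, which is negative
only for `γ₁ = eᵢ + eⱼ`, and there `ht γ₁ ≤ ht γ₂` forces `i < j`: the bad pair. -/

namespace CnRoots

/-- The standard basis vector `e_i` of `ℚ^n` (`1`-indexed: `1 ≤ i ≤ n`). -/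
def e (n i : ℕ) : Fin n → ℚ := fun j => if (j : ℕ) + 1 = i then 1 else 0

/-- The standard inner product on `ℚ^n`. -/
def inn {n : ℕ} (x y : Fin n → ℚ) : ℚ := ∑ j, x j * y j

/-- The pairing `⟨x, y^∨⟩ = 2(x,y)/(y,y)` of a vector with the coroot of `y`. -/
def pairing {n : ℕ} (x y : Fin n → ℚ) : ℚ := 2 * inn x y / inn y y

/-- Height of a root of `C_n`, computed by pairing with `ρ^∨`. -/
def ht {n : ℕ} (x : Fin n → ℚ) : ℚ := ∑ j, x j * ((n : ℚ) - (j : ℚ) - 1 / 2)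

/-- Positive roots of `C_n`: `e_i − e_j` and `e_i + e_j` for `1 ≤ i < j ≤ n`, and
`2e_i` for `1 ≤ i ≤ n`. -/
def IsPosRoot (n : ℕ) (γ : Fin n → ℚ) : Prop :=
  (∃ i j : ℕ, 1 ≤ i ∧ i < j ∧ j ≤ n ∧ γ = e n i - e n j) ∨
  (∃ i j : ℕ, 1 ≤ i ∧ i < j ∧ j ≤ n ∧ γ = e n i + e n j) ∨
  (∃ i : ℕ, 1 ≤ i ∧ i ≤ n ∧ γ = (2 : ℚ) • e n i)

/-- A *bad pair* of positive roots of `C_n`: `(1/2)·ht(γ₂) < ht(γ₁)` and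
`⟨γ₂, γ₁^∨⟩ = 2`, with the specific form `γ₂ = 2(α_i + ⋯ + α_{n−1}) + β = 2e_i` and
`γ₁ = α_i + ⋯ + α_{j−1} + 2(α_j + ⋯ + α_{n−1}) + β = e_i + e_j`, `1 ≤ i < j ≤ n`. -/
def BadPair (n : ℕ) (γ₁ γ₂ : Fin n → ℚ) : Prop :=
  ht γ₂ / 2 < ht γ₁ ∧ pairing γ₂ γ₁ = 2 ∧
  ∃ i j : ℕ, 1 ≤ i ∧ i < j ∧ j ≤ n ∧ γ₂ = (2 : ℚ) • e n i ∧ γ₁ = e n i + e n j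

variable {n : ℕ}

lemma pairing_eq_dotProduct (x γ : Fin n → ℚ) : pairing x γ = 2 * (x ⬝ᵥ γ) / (γ ⬝ᵥ γ) := rfl

lemma ht_eq_dotProduct (x : Fin n → ℚ) :
    ht x = x ⬝ᵥ fun j => (n : ℚ) - (j : ℚ) - 1 / 2 := rfl

lemma e_eq_single {i : ℕ} (hi : 1 ≤ i) (hin : i ≤ n) :
    e n i = Pi.single (⟨i - 1, by omega⟩ : Fin n) 1 := by
  ext j
  simp only [e, Pi.single_apply, Fin.ext_iff]
  congr 1
  apply propext
  omega

lemma e_dotProduct_e {k : ℕ} (i : ℕ) (hk : 1 ≤ k) (hkn : k ≤ n) :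
    e n k ⬝ᵥ e n i = if k = i then 1 else 0 := by
  rw [e_eq_single hk hkn, single_dotProduct, one_mul, e]
  simp only [Nat.sub_add_cancel hk]

lemma ht_add (x y : Fin n → ℚ) : ht (x + y) = ht x + ht y := add_dotProduct x y _

lemma ht_sub (x y : Fin n → ℚ) : ht (x - y) = ht x - ht y := sub_dotProduct x y _

lemma ht_smul (c : ℚ) (x : Fin n → ℚ) : ht (c • x) = c * ht x := smul_dotProduct c x _

lemma ht_neg (x : Fin n → ℚ) : ht (-x) = -ht x := neg_dotProduct x _

lemma ht_e {i : ℕ} (hi : 1 ≤ i) (hin : i ≤ n) : ht (e n i) = n - i + 1 / 2 := by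
  rw [ht_eq_dotProduct, e_eq_single hi hin, single_dotProduct, one_mul, Nat.cast_sub hi]
  push_cast
  ring

lemma ht_e_le_ht_e_iff {i j : ℕ} (hi : 1 ≤ i) (hin : i ≤ n) (hj : 1 ≤ j) (hjn : j ≤ n) :
    ht (e n j) ≤ ht (e n i) ↔ i ≤ j := by
  rw [ht_e hi hin, ht_e hj hjn, ← Nat.cast_le (α := ℚ)]
  constructor <;> intro h <;> linarith

lemma ht_e_pos {i : ℕ} (hi : 1 ≤ i) (hin : i ≤ n) : 0 < ht (e n i) := by
  rw [ht_e hi hin]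
  have : (i : ℚ) ≤ n := by exact_mod_cast hin
  linarith

def reflect (γ x : Fin n → ℚ) : Fin n → ℚ := x - pairing x γ • γ

section Reflect
variable (γ x y : Fin n → ℚ) (c : ℚ)

lemma reflect_add : reflect γ (x + y) = reflect γ x + reflect γ y := by
  simp only [reflect, pairing_eq_dotProduct, add_dotProduct, add_div, mul_add, add_smul]
  abel

lemma reflect_sub : reflect γ (x - y) = reflect γ x - reflect γ y := by
  simp only [reflect, pairing_eq_dotProduct, sub_dotProduct, sub_div, mul_sub, sub_smul]
  abel

lemma reflect_smul : reflect γ (c • x) = c • reflect γ x := by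
  simp only [reflect, pairing_eq_dotProduct, smul_dotProduct, smul_eq_mul, smul_sub, smul_smul]
  congr 2
  ring

lemma ht_reflect : ht (reflect γ x) = ht x - pairing x γ * ht γ := by
  rw [reflect, ht_sub, ht_smul]

end Reflect

lemma pairing_e_sub_e {p q : ℕ} (hp : 1 ≤ p) (hpn : p ≤ n) (hq : 1 ≤ q) (hqn : q ≤ n)
    (hpq : p ≠ q) (x : Fin n → ℚ) :
    pairing x (e n p - e n q) = x ⬝ᵥ e n p - x ⬝ᵥ e n q := by
  simp only [pairing_eq_dotProduct, dotProduct_sub, sub_dotProduct, e_dotProduct_e _ hp hpn,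
    e_dotProduct_e _ hq hqn, if_pos, if_neg hpq, if_neg hpq.symm]
  ring

lemma pairing_e_add_e {p q : ℕ} (hp : 1 ≤ p) (hpn : p ≤ n) (hq : 1 ≤ q) (hqn : q ≤ n)
    (hpq : p ≠ q) (x : Fin n → ℚ) :
    pairing x (e n p + e n q) = x ⬝ᵥ e n p + x ⬝ᵥ e n q := by
  simp only [pairing_eq_dotProduct, dotProduct_add, add_dotProduct, e_dotProduct_e _ hp hpn,
    e_dotProduct_e _ hq hqn, if_pos, if_neg hpq, if_neg hpq.symm]
  ring

lemma pairing_two_smul_e {p : ℕ} (hp : 1 ≤ p) (hpn : p ≤ n) (x : Fin n → ℚ) :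
    pairing x ((2 : ℚ) • e n p) = x ⬝ᵥ e n p := by
  simp only [pairing_eq_dotProduct, dotProduct_smul, smul_dotProduct, e_dotProduct_e _ hp hpn, if_pos,
    smul_eq_mul]
  ring

lemma reflect_e_sub_e_e {p q k : ℕ} (hp : 1 ≤ p) (hpn : p ≤ n) (hq : 1 ≤ q) (hqn : q ≤ n)
    (hpq : p ≠ q) :
    reflect (e n p - e n q) (e n k) = e n (Equiv.swap p q k) := by
  rw [reflect, pairing_e_sub_e hp hpn hq hqn hpq, dotProduct_comm, e_dotProduct_e _ hp hpn,
    dotProduct_comm, e_dotProduct_e _ hq hqn, Equiv.swap_apply_def]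
  split_ifs <;> subst_vars <;> first | omega | module

lemma reflect_e_add_e_e {p q k : ℕ} (hp : 1 ≤ p) (hpn : p ≤ n) (hq : 1 ≤ q) (hqn : q ≤ n)
    (hpq : p ≠ q) :
    reflect (e n p + e n q) (e n k) =
      (if k = p ∨ k = q then -1 else 1 : ℚ) • e n (Equiv.swap p q k) := by
  rw [reflect, pairing_e_add_e hp hpn hq hqn hpq, dotProduct_comm, e_dotProduct_e _ hp hpn,
    dotProduct_comm, e_dotProduct_e _ hq hqn, Equiv.swap_apply_def]
  split_ifs <;> subst_vars <;> first | omega | module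

lemma reflect_two_smul_e_e {p k : ℕ} (hp : 1 ≤ p) (hpn : p ≤ n) :
    reflect ((2 : ℚ) • e n p) (e n k) = (if k = p then -1 else 1 : ℚ) • e n k := by
  rw [reflect, pairing_two_smul_e hp hpn, dotProduct_comm, e_dotProduct_e _ hp hpn]
  split_ifs <;> subst_vars <;> first | omega | module

lemma IsPosRoot.exists_reflect_e_eq {γ : Fin n → ℚ} (h : IsPosRoot n γ) :
    ∃ (π : Equiv.Perm ℕ) (ε : ℕ → ℚ), ∀ k, 1 ≤ k → k ≤ n →
      1 ≤ π k ∧ π k ≤ n ∧ (ε k = 1 ∨ ε k = -1) ∧ reflect γ (e n k) = ε k • e n (π k) := by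
  have swap_mem {p q k : ℕ} (hp : 1 ≤ p) (hqn : q ≤ n) (hpq : p < q) (hk : 1 ≤ k) (hkn : k ≤ n) :
      1 ≤ Equiv.swap p q k ∧ Equiv.swap p q k ≤ n := by
    rw [Equiv.swap_apply_def]; split_ifs <;> omega
  rcases h with ⟨p, q, hp, hpq, hqn, rfl⟩ | ⟨p, q, hp, hpq, hqn, rfl⟩ | ⟨p, hp, hpn, rfl⟩
  · refine ⟨Equiv.swap p q, 1, fun k hk hkn => ⟨swap_mem hp hqn hpq hk hkn |>.1,
      swap_mem hp hqn hpq hk hkn |>.2, Or.inl rfl, ?_⟩⟩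
    rw [reflect_e_sub_e_e hp (by omega) (by omega) hqn hpq.ne, Pi.one_apply, one_smul]
  · refine ⟨Equiv.swap p q, fun k => if k = p ∨ k = q then -1 else 1, fun k hk hkn =>
      ⟨swap_mem hp hqn hpq hk hkn |>.1, swap_mem hp hqn hpq hk hkn |>.2, ?_,
        reflect_e_add_e_e hp (by omega) (by omega) hqn hpq.ne⟩⟩
    dsimp only
    split_ifs <;> norm_num
  · refine ⟨1, fun k => if k = p then -1 else 1, fun k hk hkn =>
      ⟨hk, hkn, ?_, reflect_two_smul_e_e hp hpn⟩⟩
    dsimp only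
    split_ifs <;> norm_num

def IsRoot (n : ℕ) (γ : Fin n → ℚ) : Prop := IsPosRoot n γ ∨ IsPosRoot n (-γ)

lemma isRoot_smul_e_add_smul_e {a b : ℕ} {s t : ℚ} (ha : 1 ≤ a) (han : a ≤ n) (hb : 1 ≤ b)
    (hbn : b ≤ n) (hab : a ≠ b) (hs : s = 1 ∨ s = -1) (ht : t = 1 ∨ t = -1) :
    IsRoot n (s • e n a + t • e n b) := by
  wlog h : a < b generalizing a b s t
  · rw [add_comm]
    exact this hb hbn ha han hab.symm ht hs (by omega)
  rcases hs with rfl | rfl <;> rcases ht with rfl | rfl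
  · exact Or.inl (Or.inr (Or.inl ⟨a, b, ha, h, hbn, by module⟩))
  · exact Or.inl (Or.inl ⟨a, b, ha, h, hbn, by module⟩)
  · exact Or.inr (Or.inl ⟨a, b, ha, h, hbn, by module⟩)
  · exact Or.inr (Or.inr (Or.inl ⟨a, b, ha, h, hbn, by module⟩))

lemma isRoot_smul_two_smul_e {a : ℕ} {s : ℚ} (ha : 1 ≤ a) (han : a ≤ n) (hs : s = 1 ∨ s = -1) :
    IsRoot n (s • (2 : ℚ) • e n a) := by
  rcases hs with rfl | rfl
  · exact Or.inl (Or.inr (Or.inr ⟨a, ha, han, by module⟩))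
  · exact Or.inr (Or.inr (Or.inr ⟨a, ha, han, by module⟩))

theorem IsPosRoot.isRoot_reflect {γ₁ γ₂ : Fin n → ℚ} (h₁ : IsPosRoot n γ₁) (h₂ : IsPosRoot n γ₂) :
    IsRoot n (reflect γ₁ γ₂) := by
  obtain ⟨π, ε, hπ⟩ := h₁.exists_reflect_e_eq
  have neg_sign {t : ℚ} (ht : t = 1 ∨ t = -1) : -t = 1 ∨ -t = -1 := by
    rcases ht with rfl | rfl <;> norm_num
  rcases h₂ with ⟨a, b, ha, hab, hbn, rfl⟩ | ⟨a, b, ha, hab, hbn, rfl⟩ | ⟨a, ha, han, rfl⟩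
  · obtain ⟨ha₁, ha₂, hεa, hra⟩ := hπ a ha (by omega)
    obtain ⟨hb₁, hb₂, hεb, hrb⟩ := hπ b (by omega) hbn
    rw [reflect_sub, hra, hrb, sub_eq_add_neg, ← neg_smul]
    exact isRoot_smul_e_add_smul_e ha₁ ha₂ hb₁ hb₂ (π.injective.ne hab.ne) hεa (neg_sign hεb)
  · obtain ⟨ha₁, ha₂, hεa, hra⟩ := hπ a ha (by omega)
    obtain ⟨hb₁, hb₂, hεb, hrb⟩ := hπ b (by omega) hbn
    rw [reflect_add, hra, hrb]
    exact isRoot_smul_e_add_smul_e ha₁ ha₂ hb₁ hb₂ (π.injective.ne hab.ne) hεa hεb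
  · obtain ⟨ha₁, ha₂, hεa, hra⟩ := hπ a ha han
    rw [reflect_smul, hra, smul_comm]
    exact isRoot_smul_two_smul_e ha₁ ha₂ hεa

lemma IsPosRoot.ht_pos {γ : Fin n → ℚ} (h : IsPosRoot n γ) : 0 < ht γ := by
  rcases h with ⟨i, j, hi, hij, hjn, rfl⟩ | ⟨i, j, hi, hij, hjn, rfl⟩ | ⟨i, hi, hin, rfl⟩
  · rw [ht_sub, ht_e hi (by omega), ht_e (by omega) hjn]
    have : (i : ℚ) < j := by exact_mod_cast hij
    linarith
  · rw [ht_add]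
    linarith [ht_e_pos (n := n) hi (by omega), ht_e_pos (n := n) (by omega) hjn]
  · rw [ht_smul]
    linarith [ht_e_pos (n := n) hi hin]

lemma IsRoot.isPosRoot_of_ht_nonneg {γ : Fin n → ℚ} (h : IsRoot n γ) (hγ : 0 ≤ ht γ) :
    IsPosRoot n γ :=
  h.resolve_right fun hneg => by linarith [hneg.ht_pos, ht_neg γ]

lemma IsPosRoot.exists_eq_two_smul_e_of_one_lt_pairing {γ₁ γ₂ : Fin n → ℚ}
    (h₁ : IsPosRoot n γ₁) (h₂ : IsPosRoot n γ₂) (hne : γ₁ ≠ γ₂) (hk : 1 < pairing γ₂ γ₁) :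
    ∃ i j : ℕ, 1 ≤ i ∧ i ≤ n ∧ 1 ≤ j ∧ j ≤ n ∧ i ≠ j ∧ γ₂ = (2 : ℚ) • e n i ∧
      (γ₁ = e n i + e n j ∨ γ₁ = e n i - e n j) := by
  -- `pairing γ₂ γ₁` is a signed sum of Kronecker deltas in the indices of `γ₁` and `γ₂`; it
  -- exceeds `1` only if `γ₂ = γ₁` or `γ₂ = 2eᵢ` with `i` an index of `γ₁`.
  rcases h₁ with ⟨p, q, hp, hpq, hqn, rfl⟩ | ⟨p, q, hp, hpq, hqn, rfl⟩ | ⟨p, hp, hpn, rfl⟩ <;>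
  [rw [pairing_e_sub_e hp (by omega) (by omega) hqn hpq.ne] at hk;
   rw [pairing_e_add_e hp (by omega) (by omega) hqn hpq.ne] at hk;
   rw [pairing_two_smul_e hp hpn] at hk] <;>
  rcases h₂ with ⟨a, b, ha, hab, hbn, rfl⟩ | ⟨a, b, ha, hab, hbn, rfl⟩ | ⟨a, ha, han, rfl⟩ <;>
  simp (disch := omega) only [sub_dotProduct, add_dotProduct, smul_dotProduct, e_dotProduct_e,
    smul_eq_mul] at hk <;>
  split_ifs at hk <;> norm_num at hk <;> subst_vars <;> first | omega | exact (hne rfl).elim |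
    (refine ⟨_, _, ?_, ?_, ?_, ?_, ?_, rfl,
      by first | exact Or.inl rfl | exact Or.inr rfl | exact Or.inl (add_comm _ _)⟩ <;> omega)

lemma pairing_two_smul_e_e_add_e {i j : ℕ} (hi : 1 ≤ i) (hin : i ≤ n) (hj : 1 ≤ j) (hjn : j ≤ n)
    (hij : i ≠ j) : pairing ((2 : ℚ) • e n i) (e n i + e n j) = 2 := by
  rw [pairing_e_add_e hi hin hj hjn hij]
  simp (disch := omega) only [smul_dotProduct, e_dotProduct_e]
  simp [hij]

lemma pairing_two_smul_e_e_sub_e {i j : ℕ} (hi : 1 ≤ i) (hin : i ≤ n) (hj : 1 ≤ j) (hjn : j ≤ n)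
    (hij : i ≠ j) : pairing ((2 : ℚ) • e n i) (e n i - e n j) = 2 := by
  rw [pairing_e_sub_e hi hin hj hjn hij]
  simp (disch := omega) only [smul_dotProduct, e_dotProduct_e]
  simp [hij]

theorem reflection_of_non_bad_pair_positive_general (n : ℕ) (γ₁ γ₂ : Fin n → ℚ)
    (h₁ : IsPosRoot n γ₁) (h₂ : IsPosRoot n γ₂) (hne : γ₁ ≠ γ₂)
    (hle : ht γ₁ ≤ ht γ₂) (hbad : ¬ BadPair n γ₁ γ₂) :
    IsPosRoot n (γ₂ - pairing γ₂ γ₁ • γ₁) := by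
  refine (h₁.isRoot_reflect h₂).isPosRoot_of_ht_nonneg ?_
  by_contra! hneg
  rw [ht_reflect] at hneg
  have hk : 1 < pairing γ₂ γ₁ := by
    by_contra! hk
    nlinarith [h₁.ht_pos]
  obtain ⟨i, j, hi, hin, hj, hjn, hij, rfl, rfl | rfl⟩ :=
    h₁.exists_eq_two_smul_e_of_one_lt_pairing h₂ hne hk
  · have hpair := pairing_two_smul_e_e_add_e hi hin hj hjn hij
    rw [ht_add, ht_smul] at hle
    have hij' : i < j := lt_of_le_of_ne ((ht_e_le_ht_e_iff hi hin hj hjn).1 (by linarith)) hij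
    exact hbad ⟨by rw [hpair] at hneg; linarith, hpair, i, j, hi, hij', hjn, rfl, rfl⟩
  · rw [pairing_two_smul_e_e_sub_e hi hin hj hjn hij, ht_sub, ht_smul] at hneg
    linarith [ht_e_pos (n := n) hj hjn]

/-- In the root system of type `C_n`, let `γ₁ ≠ γ₂` be positive roots
with `ht(γ₁) ≤ ht(γ₂)`.  If `(γ₁, γ₂)` is not a bad pair, then the reflection
`s_{γ₁}(γ₂) = γ₂ − ⟨γ₂, γ₁^∨⟩·γ₁` is again a positive root. -/
theorem reflection_of_non_bad_pair_positive (n : ℕ) (hn : 2 ≤ n) (γ₁ γ₂ : Fin n → ℚ)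
    (h₁ : IsPosRoot n γ₁) (h₂ : IsPosRoot n γ₂) (hne : γ₁ ≠ γ₂)
    (hle : ht γ₁ ≤ ht γ₂) (hbad : ¬ BadPair n γ₁ γ₂) :
    IsPosRoot n (γ₂ - pairing γ₂ γ₁ • γ₁) :=
  reflection_of_non_bad_pair_positive_general n γ₁ γ₂ h₁ h₂ hne hle hbad

end CnRoots
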